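/- (Soundness of ℓIGL.) Let S be a quasi-tree-like labelled sequent with a single formula on the right-hand side. If ℓIGL ⊢ S (i.e. there is an ∞-proof of S in ℓIK4), then birel-IGL ⊨ S, i.e. B, I ⊨ S for every model B in birel-IGL and every interpretation I of S into B. -/

import Mathlib

namespace IGL

/-- Modal formulas over propositional symbols indexed by naturals. -/
inductive Formula : Type
  | atom : ℕ → Formula
  | bot  : Formula
  | and  : Formula → Formula → Formula
  | or   : Formula → Formula → Formula
  | imp  : Formula → Formula → Formula
  | box  : Formula → Formula
  | dia  : Formula → Formula

/-- ¬A abbreviates A → ⊥. -/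
def Formula.neg (A : Formula) : Formula := Formula.imp A Formula.bot

/-- Löb's axiom □(□A→A)→□A. -/
def lobAx (A : Formula) : Formula :=
  Formula.imp (Formula.box (Formula.imp (Formula.box A) A)) (Formula.box A)

/-- Boolean evaluation of a formula, treating modal (sub)formulas and atoms as
propositional atoms; used to define substitution instances of classical
propositional tautologies. -/
def evalCPL (v : Formula → Bool) : Formula → Bool
  | Formula.atom n  => v (Formula.atom n)
  | Formula.bot     => false
  | Formula.and A B => evalCPL v A && evalCPL v B
  | Formula.or  A B => evalCPL v A || evalCPL v B
  | Formula.imp A B => !evalCPL v A || evalCPL v B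
  | Formula.box A   => v (Formula.box A)
  | Formula.dia A   => v (Formula.dia A)

/-- A (substitution instance of a) theorem of classical propositional logic. -/
def Taut (A : Formula) : Prop := ∀ v, evalCPL v A = true

/-- The modal logic K: classical propositional logic, axiom k, modus ponens, necessitation. -/
inductive KProof : Formula → Prop
  | taut {A : Formula} : Taut A → KProof A
  | axK (A B : Formula) :
      KProof (Formula.imp (Formula.box (Formula.imp A B))
        (Formula.imp (Formula.box A) (Formula.box B)))
  | mp {A B : Formula} : KProof (Formula.imp A B) → KProof A → KProof B
  | nec {A : Formula} : KProof A → KProof (Formula.box A)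

/-- The modal logic K4: K plus axiom 4. -/
inductive K4Proof : Formula → Prop
  | taut {A : Formula} : Taut A → K4Proof A
  | axK (A B : Formula) :
      K4Proof (Formula.imp (Formula.box (Formula.imp A B))
        (Formula.imp (Formula.box A) (Formula.box B)))
  | ax4 (A : Formula) :
      K4Proof (Formula.imp (Formula.box A) (Formula.box (Formula.box A)))
  | mp {A B : Formula} : K4Proof (Formula.imp A B) → K4Proof A → K4Proof B
  | nec {A : Formula} : K4Proof A → K4Proof (Formula.box A)

/-- Gödel–Löb logic GL: K4 plus Löb's axiom. -/
inductive GLProof : Formula → Prop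
  | taut {A : Formula} : Taut A → GLProof A
  | axK (A B : Formula) :
      GLProof (Formula.imp (Formula.box (Formula.imp A B))
        (Formula.imp (Formula.box A) (Formula.box B)))
  | ax4 (A : Formula) :
      GLProof (Formula.imp (Formula.box A) (Formula.box (Formula.box A)))
  | axLob (A : Formula) : GLProof (lobAx A)
  | mp {A B : Formula} : GLProof (Formula.imp A B) → GLProof A → GLProof B
  | nec {A : Formula} : GLProof A → GLProof (Formula.box A)

/-- Classical relational (Kripke) satisfaction. -/
def sat {W : Type} (R : W → W → Prop) (V : W → ℕ → Prop) : W → Formula → Prop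
  | w, Formula.atom n  => V w n
  | _, Formula.bot     => False
  | w, Formula.and A B => sat R V w A ∧ sat R V w B
  | w, Formula.or  A B => sat R V w A ∨ sat R V w B
  | w, Formula.imp A B => sat R V w A → sat R V w B
  | w, Formula.box A   => ∀ v, R w v → sat R V v A
  | w, Formula.dia A   => ∃ v, R w v ∧ sat R V v A

/-- A frame satisfies `A` if every model based on it satisfies `A` at every world. -/
def FrameSat (W : Type) (R : W → W → Prop) (A : Formula) : Prop :=
  ∀ (V : W → ℕ → Prop) (w : W), sat R V w A

/-- A relation is terminating if it admits no infinite path. -/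
def Terminating {α : Type} (r : α → α → Prop) : Prop :=
  ¬ ∃ f : ℕ → α, ∀ n, r (f n) (f (n + 1))

/-! ### Labelled sequents -/

/-- A labelled formula `x : A`. -/
abbrev LFormula := ℕ × Formula

/-- A labelled sequent `R, Γ ⇒ Δ`: a set of relational atoms and two
multisets of labelled formulas. -/
structure Sequent : Type where
  rel : Set (ℕ × ℕ)
  left : Multiset LFormula
  right : Multiset LFormula

/-- Variables occurring in a set of relational atoms. -/
def relVars (R : Set (ℕ × ℕ)) : Set ℕ := {z | ∃ w, (z, w) ∈ R ∨ (w, z) ∈ R}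

/-- Labels occurring in a multiset of labelled formulas. -/
def mLabels (Γ : Multiset LFormula) : Set ℕ := {z | ∃ A, (z, A) ∈ Γ}

/-- The variables/labels occurring in a sequent. -/
def Sequent.vars (S : Sequent) : Set ℕ := relVars S.rel ∪ mLabels S.left ∪ mLabels S.right

/-- `y` is a fresh label for the sequent `S`. -/
def Fresh (y : ℕ) (S : Sequent) : Prop := y ∉ S.vars

/-- A sequent has exactly one formula on the right-hand side. -/
def SingleRHS (S : Sequent) : Prop := Multiset.card S.right = 1

/-- Rule instances of the standard labelled calculi, presented as a relation
between a conclusion and its list of premisses.  The flag `tr` enables the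
transitivity rule (giving ℓK4 rather than ℓK), the flag `thn` enables the
relational thinning rule `th`, and the flag `ir` imposes the restriction that
the →-right and □-right rules have exactly one formula on the RHS (giving the
multi-succedent intuitionistic system mℓIK4). -/
inductive Rule (tr thn ir : Bool) : Sequent → List Sequent → Prop
  | id (R : Set (ℕ × ℕ)) (x p : ℕ) :
      Rule tr thn ir ⟨R, {(x, Formula.atom p)}, {(x, Formula.atom p)}⟩ []
  | cut (R : Set (ℕ × ℕ)) (Γ Γ' Δ Δ' : Multiset LFormula) (x : ℕ) (A : Formula) :
      Rule tr thn ir ⟨R, Γ + Γ', Δ + Δ'⟩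
        [⟨R, Γ, (x, A) ::ₘ Δ⟩, ⟨R, (x, A) ::ₘ Γ', Δ'⟩]
  | wkL (R : Set (ℕ × ℕ)) (Γ Δ : Multiset LFormula) (x : ℕ) (A : Formula) :
      Rule tr thn ir ⟨R, (x, A) ::ₘ Γ, Δ⟩ [⟨R, Γ, Δ⟩]
  | wkR (R : Set (ℕ × ℕ)) (Γ Δ : Multiset LFormula) (x : ℕ) (A : Formula) :
      Rule tr thn ir ⟨R, Γ, (x, A) ::ₘ Δ⟩ [⟨R, Γ, Δ⟩]
  | ctrL (R : Set (ℕ × ℕ)) (Γ Δ : Multiset LFormula) (x : ℕ) (A : Formula) :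
      Rule tr thn ir ⟨R, (x, A) ::ₘ Γ, Δ⟩ [⟨R, (x, A) ::ₘ (x, A) ::ₘ Γ, Δ⟩]
  | ctrR (R : Set (ℕ × ℕ)) (Γ Δ : Multiset LFormula) (x : ℕ) (A : Formula) :
      Rule tr thn ir ⟨R, Γ, (x, A) ::ₘ Δ⟩ [⟨R, Γ, (x, A) ::ₘ (x, A) ::ₘ Δ⟩]
  | th (R R' : Set (ℕ × ℕ)) (Γ Δ : Multiset LFormula) :
      thn = true → Rule tr thn ir ⟨R ∪ R', Γ, Δ⟩ [⟨R, Γ, Δ⟩]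
  | botL (R : Set (ℕ × ℕ)) (Γ Δ : Multiset LFormula) (x : ℕ) :
      Rule tr thn ir ⟨R, (x, Formula.bot) ::ₘ Γ, Δ⟩ []
  | impL (R : Set (ℕ × ℕ)) (Γ Γ' Δ Δ' : Multiset LFormula) (x : ℕ) (A B : Formula) :
      Rule tr thn ir ⟨R, (x, Formula.imp A B) ::ₘ (Γ + Γ'), Δ + Δ'⟩
        [⟨R, Γ, (x, A) ::ₘ Δ⟩, ⟨R, (x, B) ::ₘ Γ', Δ'⟩]
  | impR (R : Set (ℕ × ℕ)) (Γ Δ : Multiset LFormula) (x : ℕ) (A B : Formula) :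
      (ir = true → Δ = 0) →
      Rule tr thn ir ⟨R, Γ, (x, Formula.imp A B) ::ₘ Δ⟩ [⟨R, (x, A) ::ₘ Γ, (x, B) ::ₘ Δ⟩]
  | andL₁ (R : Set (ℕ × ℕ)) (Γ Δ : Multiset LFormula) (x : ℕ) (A B : Formula) :
      Rule tr thn ir ⟨R, (x, Formula.and A B) ::ₘ Γ, Δ⟩ [⟨R, (x, A) ::ₘ Γ, Δ⟩]
  | andL₂ (R : Set (ℕ × ℕ)) (Γ Δ : Multiset LFormula) (x : ℕ) (A B : Formula) :
      Rule tr thn ir ⟨R, (x, Formula.and A B) ::ₘ Γ, Δ⟩ [⟨R, (x, B) ::ₘ Γ, Δ⟩]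
  | orL (R : Set (ℕ × ℕ)) (Γ Δ : Multiset LFormula) (x : ℕ) (A B : Formula) :
      Rule tr thn ir ⟨R, (x, Formula.or A B) ::ₘ Γ, Δ⟩
        [⟨R, (x, A) ::ₘ Γ, Δ⟩, ⟨R, (x, B) ::ₘ Γ, Δ⟩]
  | orR₁ (R : Set (ℕ × ℕ)) (Γ Δ : Multiset LFormula) (x : ℕ) (A B : Formula) :
      Rule tr thn ir ⟨R, Γ, (x, Formula.or A B) ::ₘ Δ⟩ [⟨R, Γ, (x, A) ::ₘ Δ⟩]
  | orR₂ (R : Set (ℕ × ℕ)) (Γ Δ : Multiset LFormula) (x : ℕ) (A B : Formula) :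
      Rule tr thn ir ⟨R, Γ, (x, Formula.or A B) ::ₘ Δ⟩ [⟨R, Γ, (x, B) ::ₘ Δ⟩]
  | andR (R : Set (ℕ × ℕ)) (Γ Δ : Multiset LFormula) (x : ℕ) (A B : Formula) :
      Rule tr thn ir ⟨R, Γ, (x, Formula.and A B) ::ₘ Δ⟩
        [⟨R, Γ, (x, A) ::ₘ Δ⟩, ⟨R, Γ, (x, B) ::ₘ Δ⟩]
  | diaL (R : Set (ℕ × ℕ)) (Γ Δ : Multiset LFormula) (x y : ℕ) (A : Formula) :
      Fresh y ⟨R, (x, Formula.dia A) ::ₘ Γ, Δ⟩ →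
      Rule tr thn ir ⟨R, (x, Formula.dia A) ::ₘ Γ, Δ⟩
        [⟨insert (x, y) R, (y, A) ::ₘ Γ, Δ⟩]
  | diaR (R : Set (ℕ × ℕ)) (Γ Δ : Multiset LFormula) (x y : ℕ) (A : Formula) :
      (x, y) ∈ R →
      Rule tr thn ir ⟨R, Γ, (x, Formula.dia A) ::ₘ Δ⟩ [⟨R, Γ, (y, A) ::ₘ Δ⟩]
  | boxR (R : Set (ℕ × ℕ)) (Γ Δ : Multiset LFormula) (x y : ℕ) (A : Formula) :
      (ir = true → Δ = 0) →
      Fresh y ⟨R, Γ, (x, Formula.box A) ::ₘ Δ⟩ →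
      Rule tr thn ir ⟨R, Γ, (x, Formula.box A) ::ₘ Δ⟩
        [⟨insert (x, y) R, Γ, (y, A) ::ₘ Δ⟩]
  | boxL (R : Set (ℕ × ℕ)) (Γ Δ : Multiset LFormula) (x y : ℕ) (A : Formula) :
      (x, y) ∈ R →
      Rule tr thn ir ⟨R, (x, Formula.box A) ::ₘ Γ, Δ⟩ [⟨R, (y, A) ::ₘ Γ, Δ⟩]
  | trans (R : Set (ℕ × ℕ)) (Γ Δ : Multiset LFormula) (x y z : ℕ) :
      tr = true → (x, y) ∈ R → (y, z) ∈ R →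
      Rule tr thn ir ⟨R, Γ, Δ⟩ [⟨insert (x, z) R, Γ, Δ⟩]

/-- The labelled calculus ℓK. -/
def RuleLK : Sequent → List Sequent → Prop := Rule false true false

/-- The labelled calculus ℓK4 (= ℓK + transitivity rule). -/
def RuleLK4 : Sequent → List Sequent → Prop := Rule true true false

/-- ℓK4 without the thinning rule th. -/
def RuleLK4NoTh : Sequent → List Sequent → Prop := Rule true false false

/-- The multi-succedent intuitionistic calculus mℓIK4: ℓK4 where the →-right
and □-right rules must have exactly one formula on the RHS. -/
def RuleMLIK4 : Sequent → List Sequent → Prop := Rule true true true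

/-- The single-succedent intuitionistic calculus ℓIK4: the restriction of ℓK4
to sequents with exactly one formula on the RHS. -/
def RuleLIK4 : Sequent → List Sequent → Prop :=
  fun S ps => RuleLK4 S ps ∧ SingleRHS S ∧ ∀ p ∈ ps, SingleRHS p

/-- ℓIK4 without the thinning rule th. -/
def RuleLIK4NoTh : Sequent → List Sequent → Prop :=
  fun S ps => RuleLK4NoTh S ps ∧ SingleRHS S ∧ ∀ p ∈ ps, SingleRHS p

/-- Finite (wellfounded) derivability from a set of rule instances. -/
inductive Deriv (rule : Sequent → List Sequent → Prop) : Sequent → Prop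
  | step (S : Sequent) (prems : List Sequent) :
      rule S prems → (∀ S' ∈ prems, Deriv rule S') → Deriv rule S

/-! ### Non-wellfounded proofs -/

/-- A (possibly infinite) preproof of `S₀`: a tree of sequents, given as a
partial labelling of finite paths (lists of child indices), whose root is `S₀`
and in which every node is the conclusion of a rule instance whose premisses
are exactly its children. -/
structure Preproof (rule : Sequent → List Sequent → Prop) (S₀ : Sequent) : Type where
  node : List ℕ → Option Sequent
  root : node [] = some S₀
  children : ∀ p S, node p = some S →
    ∃ prems : List Sequent, rule S prems ∧ ∀ i : ℕ, node (p ++ [i]) = prems[i]?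

/-- The path of length `n` along the branch determined by `f`. -/
def branchPath (f : ℕ → ℕ) (n : ℕ) : List ℕ := (List.range n).map f

/-- An infinite sequence of sequents (a branch) has a progressing trace:
from some point on there are labels `x i` occurring in the `i`-th sequent with
either `x (i+1) = x i` or the relational atom `(x i) R (x (i+1))` occurring in
the `i`-th sequent, the latter happening infinitely often. -/
def Progressing (Sb : ℕ → Sequent) : Prop :=
  ∃ (k : ℕ) (x : ℕ → ℕ),
    (∀ i, k ≤ i → x i ∈ (Sb i).vars) ∧
    (∀ i, k ≤ i → x (i + 1) = x i ∨ (x i, x (i + 1)) ∈ (Sb i).rel) ∧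
    (∀ n, ∃ i, n ≤ i ∧ k ≤ i ∧ (x i, x (i + 1)) ∈ (Sb i).rel)

/-- `S₀` has an ∞-proof: a preproof all of whose infinite branches have a
progressing trace. -/
def InfProof (rule : Sequent → List Sequent → Prop) (S₀ : Sequent) : Prop :=
  ∃ P : Preproof rule S₀,
    ∀ (f : ℕ → ℕ) (Sb : ℕ → Sequent),
      (∀ n, P.node (branchPath f n) = some (Sb n)) → Progressing Sb

/-! ### Birelational semantics -/

/-- A birelational model on the set of worlds `W`: an intuitionistic partial
order `le`, an accessibility relation `acc` satisfying the frame conditions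
(F1) and (F2), and a monotone valuation. -/
structure Birel (W : Type) : Type where
  le : W → W → Prop
  le_refl : ∀ w, le w w
  le_trans : ∀ u v w, le u v → le v w → le u w
  le_antisymm : ∀ u v, le u v → le v u → u = v
  acc : W → W → Prop
  F1 : ∀ w w' v, le w w' → acc w v → ∃ v', le v v' ∧ acc w' v'
  F2 : ∀ w v v', acc w v → le v v' → ∃ w', le w w' ∧ acc w' v'
  val : W → ℕ → Prop
  val_mono : ∀ w w', le w w' → ∀ p, val w p → val w' p

/-- Birelational satisfaction. -/
def bsat {W : Type} (B : Birel W) : W → Formula → Prop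
  | w, Formula.atom p  => B.val w p
  | _, Formula.bot     => False
  | w, Formula.and A C => bsat B w A ∧ bsat B w C
  | w, Formula.or  A C => bsat B w A ∨ bsat B w C
  | w, Formula.imp A C => ∀ w', B.le w w' → bsat B w' A → bsat B w' C
  | w, Formula.box A   => ∀ w' v, B.le w w' → B.acc w' v → bsat B v A
  | w, Formula.dia A   => ∃ v, B.acc w v ∧ bsat B v A

/-- Membership in the class birel-IGL: the accessibility relation is
transitive and the composite ≤;R is terminating. -/
def BirelIGL {W : Type} (B : Birel W) : Prop :=
  Transitive B.acc ∧ Terminating (fun u v => ∃ m, B.le u m ∧ B.acc m v)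

/-- An interpretation of a sequent into a birelational model: a map on labels
sending relational atoms of the sequent to accessibility-related worlds. -/
def Interp {W : Type} (B : Birel W) (I : ℕ → W) (S : Sequent) : Prop :=
  ∀ x y, (x, y) ∈ S.rel → B.acc (I x) (I y)

/-- `B, I ⊨ S`. -/
def seqSat {W : Type} (B : Birel W) (I : ℕ → W) (S : Sequent) : Prop :=
  (∀ q ∈ S.left, bsat B (I q.1) q.2) → ∃ q ∈ S.right, bsat B (I q.1) q.2

/-- `B ⊨ S`: satisfaction under every interpretation. -/
def seqValid {W : Type} (B : Birel W) (S : Sequent) : Prop :=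
  ∀ I : ℕ → W, Interp B I S → seqSat B I S

/-- Conjunction of a nonempty list of formulas `A ∧ B₁ ∧ ... ∧ Bₙ`. -/
def conjList : Formula → List Formula → Formula
  | A, [] => A
  | A, B :: l => Formula.and A (conjList B l)

/-! ### (Quasi-)trees -/

/-- A set of relational atoms is a tree: there is a root from which every
other variable is reachable by a unique path of relational atoms. -/
def IsTree (R : Set (ℕ × ℕ)) : Prop :=
  ∃ x₀ ∈ relVars R, ∀ x ∈ relVars R, x ≠ x₀ →
    ∃! l : List ℕ, l ≠ [] ∧ List.Chain (fun a b => (a, b) ∈ R) x₀ l ∧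
      l.getLast? = some x

/-- A quasi-tree: squeezed between a tree and its transitive closure. -/
def IsQuasiTree (R : Set (ℕ × ℕ)) : Prop :=
  ∃ R₀ : Set (ℕ × ℕ), IsTree R₀ ∧ R₀ ⊆ R ∧
    ∀ q ∈ R, Relation.TransGen (fun a b => (a, b) ∈ R₀) q.1 q.2

/-- The (single-succedent) sequent `R, Γ ⇒ x:A` is quasi-tree-like. -/
def QuasiTreeLike (R : Set (ℕ × ℕ)) (Γ : Multiset LFormula) (x : ℕ) : Prop :=
  (R = ∅ ∧ mLabels Γ ⊆ {x}) ∨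
  (IsQuasiTree R ∧ mLabels Γ ∪ {x} ⊆ relVars R)

/-! ### Kripke predicate structures -/

/-- A Kripke (predicate) structure: partially ordered worlds, growing nonempty
domains, monotone interpretations of the unary predicates, and growing binary
relations on the domains. -/
structure Kripke (W D : Type) : Type where
  le : W → W → Prop
  le_refl : ∀ w, le w w
  le_trans : ∀ u v w, le u v → le v w → le u w
  le_antisymm : ∀ u v, le u v → le v u → u = v
  Dom : W → Set D
  Dom_ne : ∀ w, (Dom w).Nonempty
  Dom_mono : ∀ w w', le w w' → Dom w ⊆ Dom w'
  Pr : W → ℕ → Set D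
  Pr_sub : ∀ w p, Pr w p ⊆ Dom w
  Pr_mono : ∀ w w' p, le w w' → Pr w p ⊆ Pr w' p
  Rel : W → D → D → Prop
  Rel_dom : ∀ w d e, Rel w d e → d ∈ Dom w ∧ e ∈ Dom w
  Rel_mono : ∀ w w' d e, le w w' → Rel w d e → Rel w' d e

/-- Satisfaction `K, w ⊨^ρ ⟨A⟩ₓ` of the standard translation of `A`; since the
translation of `A` at `x` has only `x` free, satisfaction is presented through
the value `d = ρ x` of the environment at `x`. -/
def ksat {W D : Type} (K : Kripke W D) : W → D → Formula → Prop
  | w, d, Formula.atom p  => d ∈ K.Pr w p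
  | _, _, Formula.bot     => False
  | w, d, Formula.and A B => ksat K w d A ∧ ksat K w d B
  | w, d, Formula.or  A B => ksat K w d A ∨ ksat K w d B
  | w, d, Formula.imp A B => ∀ w', K.le w w' → ksat K w' d A → ksat K w' d B
  | w, d, Formula.box A   => ∀ w' e, K.le w w' → K.Rel w' d e → ksat K w' e A
  | w, d, Formula.dia A   => ∃ e, K.Rel w d e ∧ ksat K w e A

/-- Membership in the class pred-IGL: each `R_w` is transitive and the
composite `≤_{D_W} ; R_{D_W}` on pairs `(w, d)` with `d ∈ D_w` is terminating. -/
def PredIGL {W D : Type} (K : Kripke W D) : Prop :=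
  (∀ w, Transitive (K.Rel w)) ∧
  ¬ ∃ (f : ℕ → W) (g : ℕ → D),
      ∀ n, g n ∈ K.Dom (f n) ∧ K.le (f n) (f (n + 1)) ∧
        K.Rel (f (n + 1)) (g n) (g (n + 1))

section Soundness
open Relation

variable {W : Type}

lemma bsat_mono (B : Birel W) : ∀ (A : Formula) {w w'}, B.le w w' → bsat B w A → bsat B w' A := by
  intro A
  induction A with
  | atom p => intro w w' h hs; exact B.val_mono _ _ h p hs
  | bot => intro w w' h hs; exact hs
  | and A C ihA ihC =>
      intro w w' h hs
      exact ⟨ihA h hs.1, ihC h hs.2⟩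
  | or A C ihA ihC =>
      intro w w' h hs
      rcases hs with hs | hs
      · exact Or.inl (ihA h hs)
      · exact Or.inr (ihC h hs)
  | imp A C ihA ihC =>
      intro w w' h hs u hu ha
      exact hs u (B.le_trans _ _ _ h hu) ha
  | box A ih =>
      intro w w' h hs u v hu hv
      exact hs u v (B.le_trans _ _ _ h hu) hv
  | dia A ih =>
      intro w w' h hs
      obtain ⟨v, hv, hs⟩ := hs
      obtain ⟨v', hv', ha'⟩ := B.F1 w w' v h hv
      exact ⟨v', ha', ih hv' hs⟩

/-- the composite relation ≤;R -/
def comp (B : Birel W) : W → W → Prop := fun u v => ∃ m, B.le u m ∧ B.acc m v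

lemma no_acc_self (B : Birel W) (hterm : Terminating (comp B)) {w : W} (h : B.acc w w) : False :=
  hterm ⟨fun _ => w, fun _ => ⟨w, B.le_refl w, h⟩⟩

lemma le_chain (B : Birel W) (w : ℕ → W) :
    ∀ a b, a ≤ b → (∀ j, a ≤ j → j < b → B.le (w j) (w (j+1))) → B.le (w a) (w b) := by
  intro a b
  induction b with
  | zero => intro h _; have : a = 0 := by omega
            subst this; exact B.le_refl _
  | succ b ih =>
      intro hab hj
      rcases Nat.lt_or_ge a (b+1) with h | h
      · have hab' : a ≤ b := by omega
        exact B.le_trans _ _ _ (ih hab' (fun j h1 h2 => hj j h1 (by omega))) (hj b hab' (by omega))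
      · have : a = b + 1 := by omega
        subst this; exact B.le_refl _

lemma no_infinite_mixed (B : Birel W) (hterm : Terminating (comp B)) (w : ℕ → W) (k : ℕ)
    (hstep : ∀ i, k ≤ i → B.le (w i) (w (i+1)) ∨ ∃ v, B.acc (w i) v ∧ B.le v (w (i+1)))
    (hinf : ∀ n, ∃ i, n ≤ i ∧ k ≤ i ∧ ∃ v, B.acc (w i) v ∧ B.le v (w (i+1))) : False := by
  classical
  set Q : ℕ → Prop := fun i => ∃ v, B.acc (w i) v ∧ B.le v (w (i+1)) with hQ
  have hfind : ∀ n, ∃ i, n ≤ i ∧ k ≤ i ∧ Q i := hinf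
  -- indices of composite steps, chosen minimally
  let idx : ℕ → ℕ := fun n => Nat.rec (Nat.find (hfind k)) (fun _ prev => Nat.find (hfind (prev+1))) n
  have hidx0 : idx 0 = Nat.find (hfind k) := rfl
  have hidxS : ∀ n, idx (n+1) = Nat.find (hfind (idx n + 1)) := fun n => rfl
  have hQidx : ∀ n, Q (idx n) := by
    intro n; cases n with
    | zero => exact (Nat.find_spec (hfind k)).2.2
    | succ n => exact (Nat.find_spec (hfind (idx n + 1))).2.2
  have hkidx : ∀ n, k ≤ idx n := by
    intro n; cases n with
    | zero => exact (Nat.find_spec (hfind k)).2.1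
    | succ n => exact (Nat.find_spec (hfind (idx n + 1))).2.1
  have hlt : ∀ n, idx n + 1 ≤ idx (n+1) := by
    intro n; exact (Nat.find_spec (hfind (idx n + 1))).1
  have hmin : ∀ n j, idx n + 1 ≤ j → j < idx (n+1) → ¬ Q j := by
    intro n j h1 h2 hq
    have := Nat.find_min (hfind (idx n + 1)) (m := j) (by rw [hidxS] at h2; exact h2)
    exact this ⟨h1, le_trans (le_trans (hkidx n) (Nat.le_succ _)) h1, hq⟩
  let g : ℕ → W := fun n => (hQidx n).choose
  apply hterm
  refine ⟨g, fun n => ?_⟩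
  have hspec := (hQidx n).choose_spec
  have hspec' := (hQidx (n+1)).choose_spec
  refine ⟨w (idx (n+1)), ?_, hspec'.1⟩
  have hle : B.le (w (idx n + 1)) (w (idx (n+1))) := by
    apply le_chain B w _ _ (hlt n)
    intro j h1 h2
    rcases hstep j (le_trans (le_trans (hkidx n) (Nat.le_succ _)) h1) with h | h
    · exact h
    · exact absurd h (hmin n j h1 h2)
  exact B.le_trans _ _ _ hspec.2 hle

end Soundness

section Lift
open Relation
variable {W : Type}
attribute [local instance] Classical.propDecidable

/-- parent-edge relation: `a` is the parent of `b`. -/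
def pedge (par : ℕ → Option ℕ) : ℕ → ℕ → Prop := fun a b => par b = some a

lemma rtg_rank_le {par : ℕ → Option ℕ} {rank : ℕ → ℕ}
    (hrk : ∀ m k, par m = some k → rank k < rank m) {a b : ℕ}
    (h : ReflTransGen (pedge par) a b) : rank a ≤ rank b := by
  induction h with
  | refl => exact le_refl _
  | tail h₁ h₂ ih => exact le_trans ih (le_of_lt (hrk _ _ h₂))

lemma exists_child {par : ℕ → Option ℕ} {n n₀ : ℕ} (hn : n ≠ n₀)
    (ha : ReflTransGen (pedge par) n n₀) :
    ∃ c, par c = some n ∧ ReflTransGen (pedge par) c n₀ := by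
  rcases ha.cases_head with h | ⟨c, hc, hcs⟩
  · exact absurd h hn
  · exact ⟨c, hc, hcs⟩

lemma pedge_linear {par : ℕ → Option ℕ} :
    ∀ {a t : ℕ}, ReflTransGen (pedge par) a t → ∀ b, ReflTransGen (pedge par) b t →
      ReflTransGen (pedge par) a b ∨ ReflTransGen (pedge par) b a := by
  intro a t h
  induction h using ReflTransGen.head_induction_on with
  | refl => intro b hb; exact Or.inr hb
  | head hstep htail ih =>
      rename_i x y
      intro b hb
      rcases ih b hb with h | h
      · exact Or.inl (ReflTransGen.head hstep h)
      · rcases h.cases_tail with h | ⟨e, he, he2⟩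
        · subst h; exact Or.inl (ReflTransGen.single hstep)
        · have : e = x := by
            have := hstep; unfold pedge at this he2
            rw [this] at he2; exact (Option.some_injective _ he2).symm
          subst this
          exact Or.inr he
  
lemma uniq_child {par : ℕ → Option ℕ} {rank : ℕ → ℕ}
    (hrk : ∀ m k, par m = some k → rank k < rank m) {n n₀ c₁ c₂ : ℕ}
    (h₁ : par c₁ = some n) (h₂ : par c₂ = some n)
    (ha₁ : ReflTransGen (pedge par) c₁ n₀) (ha₂ : ReflTransGen (pedge par) c₂ n₀) :
    c₁ = c₂ := by
  have key : ∀ a b : ℕ, par a = some n → par b = some n →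
      ReflTransGen (pedge par) a b → a = b := by
    intro a b hpa hpb hab
    by_contra hne
    rcases hab.cases_tail with h | ⟨e, he, he2⟩
    · exact hne h.symm
    · have hen : e = n := by
        unfold pedge at he2; rw [hpb] at he2; exact (Option.some_injective _ he2).symm
      have h1 : rank a ≤ rank e := rtg_rank_le hrk he
      have h2 : rank n < rank a := hrk _ _ hpa
      rw [hen] at h1
      omega
  rcases pedge_linear ha₁ c₂ ha₂ with h | h
  · exact key _ _ h₁ h₂ h
  · exact (key _ _ h₂ h₁ h).symm

lemma anc_rank_lt {par : ℕ → Option ℕ} {rank : ℕ → ℕ}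
    (hrk : ∀ m k, par m = some k → rank k < rank m) {n n₀ : ℕ} (hn : n ≠ n₀)
    (ha : ReflTransGen (pedge par) n n₀) : rank n < rank n₀ := by
  obtain ⟨c, hc, hcs⟩ := exists_child hn ha
  exact lt_of_lt_of_le (hrk _ _ hc) (rtg_rank_le hrk hcs)

/-- termination measure for `lift`. -/
noncomputable def liftMeasure (par : ℕ → Option ℕ) (rank : ℕ → ℕ) (n₀ n : ℕ) : ℕ :=
  if ReflTransGen (pedge par) n n₀ then rank n₀ - rank n else rank n + rank n₀ + 1

lemma liftMeasure_anc {par : ℕ → Option ℕ} {rank : ℕ → ℕ}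
    (hrk : ∀ m k, par m = some k → rank k < rank m) {n n₀ c : ℕ}
    (hn : n ≠ n₀) (ha : ReflTransGen (pedge par) n n₀)
    (hc : par c = some n) (hcs : ReflTransGen (pedge par) c n₀) :
    liftMeasure par rank n₀ c < liftMeasure par rank n₀ n := by
  unfold liftMeasure
  rw [if_pos ha, if_pos hcs]
  have h1 : rank n < rank c := hrk _ _ hc
  have h2 : rank c ≤ rank n₀ := rtg_rank_le hrk hcs
  have h3 : rank n < rank n₀ := anc_rank_lt hrk hn ha
  omega

lemma liftMeasure_par {par : ℕ → Option ℕ} {rank : ℕ → ℕ}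
    (hrk : ∀ m k, par m = some k → rank k < rank m) {n n₀ k : ℕ}
    (ha : ¬ ReflTransGen (pedge par) n n₀) (hp : par n = some k) :
    liftMeasure par rank n₀ k < liftMeasure par rank n₀ n := by
  unfold liftMeasure
  rw [if_neg ha]
  have h1 : rank k < rank n := hrk _ _ hp
  by_cases h : ReflTransGen (pedge par) k n₀
  · rw [if_pos h]
    have := rtg_rank_le hrk h
    omega
  · rw [if_neg h]; omega

noncomputable def lift (B : Birel W) (J : ℕ → W) (par : ℕ → Option ℕ) (rank : ℕ → ℕ)
    (hrk : ∀ m k, par m = some k → rank k < rank m)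
    (hac : ∀ m k, par m = some k → B.acc (J k) (J m))
    (n₀ : ℕ) (w' : W) (n : ℕ) : W :=
  if hn : n = n₀ then w'
  else if ha : ReflTransGen (pedge par) n n₀ then
    if hg : B.le (J (exists_child hn ha).choose)
        (lift B J par rank hrk hac n₀ w' (exists_child hn ha).choose) then
      (B.F2 (J n) (J (exists_child hn ha).choose)
        (lift B J par rank hrk hac n₀ w' (exists_child hn ha).choose)
        (hac _ n (exists_child hn ha).choose_spec.1) hg).choose
    else J n
  else
    match hp : par n with
    | none => J n
    | some k =>
      if hg : B.le (J k) (lift B J par rank hrk hac n₀ w' k) then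
        (B.F1 (J k) (lift B J par rank hrk hac n₀ w' k) (J n) hg (hac n k hp)).choose
      else J n
termination_by liftMeasure par rank n₀ n
decreasing_by
  all_goals first
    | exact liftMeasure_anc hrk hn ha (exists_child hn ha).choose_spec.1
        (exists_child hn ha).choose_spec.2
    | exact liftMeasure_par hrk ha hp

end Lift

section Lift2
open Relation
variable {W : Type}
attribute [local instance] Classical.propDecidable

variable {B : Birel W} {J : ℕ → W} {par : ℕ → Option ℕ} {rank : ℕ → ℕ}
  {hrk : ∀ m k, par m = some k → rank k < rank m}
  {hac : ∀ m k, par m = some k → B.acc (J k) (J m)}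
  {n₀ : ℕ} {w' : W}

lemma lift_root : lift B J par rank hrk hac n₀ w' n₀ = w' := by
  rw [lift.eq_def]
  simp

lemma lift_le (hw : B.le (J n₀) w') :
    ∀ n, B.le (J n) (lift B J par rank hrk hac n₀ w' n) := by
  have H : ∀ N n, liftMeasure par rank n₀ n < N →
      B.le (J n) (lift B J par rank hrk hac n₀ w' n) := by
    intro N
    induction N with
    | zero => intro n h; omega
    | succ N ih =>
        intro n hN
        rw [lift.eq_def]
        split
        · rename_i hn; rw [hn]; exact hw
        · rename_i hn
          split
          · rename_i ha
            have hcs := (exists_child hn ha).choose_spec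
            have hm : liftMeasure par rank n₀ (exists_child hn ha).choose <
                liftMeasure par rank n₀ n := liftMeasure_anc hrk hn ha hcs.1 hcs.2
            have hle := ih (exists_child hn ha).choose (by omega)
            rw [dif_pos hle]
            exact (B.F2 (J n) _ _ (hac _ n hcs.1) hle).choose_spec.1
          · rename_i ha
            split
            · exact B.le_refl _
            · rename_i k hp
              have hm : liftMeasure par rank n₀ k < liftMeasure par rank n₀ n :=
                liftMeasure_par hrk ha hp
              have hle := ih k (by omega)
              rw [dif_pos hle]
              exact (B.F1 (J k) _ (J n) hle (hac n k hp)).choose_spec.1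
  exact fun n => H _ n (Nat.lt_succ_self _)

lemma lift_acc (hw : B.le (J n₀) w') :
    ∀ m k, par m = some k → B.acc (lift B J par rank hrk hac n₀ w' k)
      (lift B J par rank hrk hac n₀ w' m) := by
  intro m k hp
  by_cases ham : ReflTransGen (pedge par) m n₀
  · -- k is a proper ancestor of n₀ whose chain-child is m
    have hak : ReflTransGen (pedge par) k n₀ := ReflTransGen.head hp ham
    have hk : k ≠ n₀ := by
      intro h
      subst h
      have h1 := hrk _ _ hp
      have h2 := rtg_rank_le hrk ham
      omega
    conv_lhs => rw [lift.eq_def]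
    rw [dif_neg hk, dif_pos hak]
    have hcs := (exists_child hk hak).choose_spec
    have hcm : (exists_child hk hak).choose = m :=
      uniq_child hrk hcs.1 hp hcs.2 ham
    subst hcm
    have hle := lift_le (hrk := hrk) (hac := hac) hw (exists_child hk hak).choose
    rw [dif_pos hle]
    exact (B.F2 (J k) _ _ (hac _ k hcs.1) hle).choose_spec.2
  · -- m is handled by its own unfolding (descendant branch)
    have hm : m ≠ n₀ := fun h => ham (h ▸ ReflTransGen.refl)
    conv_rhs => rw [lift.eq_def]
    rw [dif_neg hm, dif_neg ham]
    have hle := lift_le (hrk := hrk) (hac := hac) hw k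
    split
    · rename_i hnone; rw [hp] at hnone; cases hnone
    · rename_i k' hp'
      rw [hp] at hp'
      injection hp' with hk'
      subst hk'
      rw [dif_pos hle]
      exact (B.F1 (J k) _ (J m) hle (hac m k hp)).choose_spec.2

end Lift2

section Cert
open Relation
variable {W : Type}
attribute [local instance] Classical.propDecidable

/-- A tree certificate for an interpretation and a set of relational atoms. -/
def Cert (M : Birel W) (I : ℕ → W) (Rl : Set (ℕ × ℕ)) : Prop :=
  ∃ (N : ℕ) (ι : ℕ → ℕ) (J : ℕ → W) (par : ℕ → Option ℕ) (rank : ℕ → ℕ),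
    (∀ m k, par m = some k → rank k < rank m) ∧
    (∀ m k, par m = some k → M.acc (J k) (J m)) ∧
    (∀ p ∈ Rl, Relation.TransGen (pedge par) (ι p.1) (ι p.2)) ∧
    (∀ z, I z = J (ι z)) ∧
    (∀ z, ι z % 2 = 0 ∨ ι z < 2*N+1) ∧
    (∀ m k, par m = some k → (m % 2 = 0 ∨ m < 2*N+1) ∧ (k % 2 = 0 ∨ k < 2*N+1))

/-- A "bad" (falsified, certified) sequent. -/
def Bad (M : Birel W) (I : ℕ → W) (S : Sequent) : Prop :=
  (∀ q ∈ S.left, bsat M (I q.1) q.2) ∧ (∀ q ∈ S.right, ¬ bsat M (I q.1) q.2) ∧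
    Cert M I S.rel

lemma transGen_acc {M : Birel W} (htr : Transitive M.acc) {J : ℕ → W}
    {par : ℕ → Option ℕ} (h2 : ∀ m k, par m = some k → M.acc (J k) (J m))
    {a b : ℕ} (h : TransGen (pedge par) a b) : M.acc (J a) (J b) := by
  induction h with
  | single h => exact h2 _ _ h
  | tail h₁ h₂ ih => exact htr ih (h2 _ _ h₂)

lemma cert_acc {M : Birel W} (htr : Transitive M.acc) {I : ℕ → W} {Rl : Set (ℕ × ℕ)}
    (hc : Cert M I Rl) : ∀ p ∈ Rl, M.acc (I p.1) (I p.2) := by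
  obtain ⟨N, ι, J, par, rank, h1, h2, h3, h4, h5, h6⟩ := hc
  intro p hp
  rw [h4 p.1, h4 p.2]
  exact transGen_acc htr h2 (h3 p hp)

lemma cert_lift {M : Birel W} {I : ℕ → W} {Rl : Set (ℕ × ℕ)} (hC : Cert M I Rl)
    {x : ℕ} {w' : W} (hw : M.le (I x) w') :
    ∃ I', I' x = w' ∧ (∀ z, M.le (I z) (I' z)) ∧ Cert M I' Rl := by
  obtain ⟨N, ι, J, par, rank, h1, h2, h3, h4, h5, h6⟩ := hC
  have hw' : M.le (J (ι x)) w' := by rw [← h4]; exact hw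
  refine ⟨fun z => lift M J par rank h1 h2 (ι x) w' (ι z), lift_root, ?_,
    N, ι, _, par, rank, h1, fun m k h => lift_acc hw' m k h, h3, fun z => rfl, h5, h6⟩
  intro z; rw [h4 z]; exact lift_le hw' (ι z)

lemma cert_alloc {M : Birel W} {I : ℕ → W} {Rl : Set (ℕ × ℕ)} (hC : Cert M I Rl)
    {x y : ℕ} {v : W} (hacc : M.acc (I x) v) (hxy : x ≠ y)
    (hyR : ∀ p ∈ Rl, p.1 ≠ y ∧ p.2 ≠ y) :
    ∃ I', I' y = v ∧ (∀ z, z ≠ y → I' z = I z) ∧ Cert M I' (insert (x,y) Rl) := by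
  obtain ⟨N, ι, J, par, rank, h1, h2, h3, h4, h5, h6⟩ := hC
  set n := 2*N+1 with hn
  have hιn : ∀ z, ι z ≠ n := by
    intro z h
    rcases h5 z with h' | h' <;> omega
  have hparn : ∀ m k, par m = some k → m ≠ n ∧ k ≠ n := by
    intro m k h
    obtain ⟨hm, hk⟩ := h6 m k h
    constructor <;> [rcases hm with h'|h'; rcases hk with h'|h'] <;> omega
  refine ⟨fun z => if z = y then v else J (ι z), by simp, fun z hz => by simp [hz, h4], 
    N+1, fun z => if z = y then n else ι z, fun m => if m = n then v else J m,
    fun m => if m = n then some (ι x) else par m,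
    fun m => if m = n then rank (ι x) + 1 else rank m, ?_, ?_, ?_, ?_, ?_, ?_⟩
  · intro m k h
    dsimp only at h ⊢
    by_cases hm : m = n
    · rw [if_pos hm] at h
      injection h with h; subst h
      rw [if_pos hm, if_neg (hιn x)]
      omega
    · rw [if_neg hm] at h
      have hkn := (hparn m k h).2
      rw [if_neg hm, if_neg hkn]
      exact h1 m k h
  · intro m k h
    dsimp only at h ⊢
    by_cases hm : m = n
    · rw [if_pos hm] at h
      injection h with h; subst h
      rw [if_pos hm, if_neg (hιn x)]
      rw [h4 x] at hacc; exact hacc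
    · rw [if_neg hm] at h
      have hkn := (hparn m k h).2
      rw [if_neg hm, if_neg hkn]
      exact h2 m k h
  · intro p hp
    rcases Set.mem_insert_iff.mp hp with rfl | hp
    · dsimp only
      rw [if_neg hxy, if_pos rfl]
      apply TransGen.single
      show (if n = n then some (ι x) else par n) = some (ι x)
      rw [if_pos rfl]
    · have h' := h3 p hp
      have he : ∀ a b : ℕ, pedge par a b →
          pedge (fun m => if m = n then some (ι x) else par m) a b := by
        intro a b hab
        have hbn := (hparn b a hab).1
        show (if b = n then some (ι x) else par b) = some a
        rw [if_neg hbn]; exact hab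
      dsimp only
      rw [if_neg (hyR p hp).1, if_neg (hyR p hp).2]
      exact TransGen.mono he _ _ h'
  · intro z
    dsimp only
    by_cases hz : z = y
    · rw [if_pos hz, if_pos hz, if_pos rfl]
    · rw [if_neg hz, if_neg hz, if_neg (hιn z)]
  · intro z
    dsimp only
    by_cases hz : z = y
    · rw [if_pos hz]; right; omega
    · rw [if_neg hz]
      rcases h5 z with h' | h'
      · exact Or.inl h'
      · right; omega
  · intro m k h
    dsimp only at h ⊢
    by_cases hm : m = n
    · rw [if_pos hm] at h
      injection h with h; subst h
      constructor
      · right; omega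
      · rcases h5 x with h' | h'
        · exact Or.inl h'
        · right; omega
    · rw [if_neg hm] at h
      obtain ⟨hm', hk'⟩ := h6 m k h
      constructor
      · rcases hm' with h'|h'; exacts [Or.inl h', Or.inr (by omega)]
      · rcases hk' with h'|h'; exacts [Or.inl h', Or.inr (by omega)]

end Cert

section Step
open Relation
variable {W : Type}
attribute [local instance] Classical.propDecidable

lemma mem_vars_left {S : Sequent} {q : LFormula} (hq : q ∈ S.left) : q.1 ∈ S.vars :=
  Set.mem_union_left _ (Set.mem_union_right _ ⟨q.2, hq⟩)

lemma mem_vars_right {S : Sequent} {q : LFormula} (hq : q ∈ S.right) : q.1 ∈ S.vars :=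
  Set.mem_union_right _ ⟨q.2, hq⟩

lemma mem_vars_rel1 {S : Sequent} {a b : ℕ} (hp : (a, b) ∈ S.rel) : a ∈ S.vars :=
  Set.mem_union_left _ (Set.mem_union_left _ ⟨b, Or.inl hp⟩)

lemma mem_vars_rel2 {S : Sequent} {a b : ℕ} (hp : (a, b) ∈ S.rel) : b ∈ S.vars :=
  Set.mem_union_left _ (Set.mem_union_left _ ⟨a, Or.inr hp⟩)

lemma singleRHS_zero {R : Set (ℕ × ℕ)} {Γ Δ : Multiset LFormula} {x : ℕ} {A : Formula}
    (h : SingleRHS ⟨R, Γ, (x, A) ::ₘ Δ⟩) : Δ = 0 := by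
  unfold SingleRHS at h
  rw [show (Sequent.right ⟨R, Γ, (x, A) ::ₘ Δ⟩) = (x, A) ::ₘ Δ from rfl,
    Multiset.card_cons] at h
  exact Multiset.card_eq_zero.mp (by omega)

lemma not_bsat_imp {M : Birel W} {w : W} {A C : Formula}
    (h : ¬ bsat M w (Formula.imp A C)) :
    ∃ w', M.le w w' ∧ bsat M w' A ∧ ¬ bsat M w' C := by
  have h' : ¬ ∀ w', M.le w w' → bsat M w' A → bsat M w' C := h
  push_neg at h'
  exact h'

lemma not_bsat_box {M : Birel W} {w : W} {A : Formula}
    (h : ¬ bsat M w (Formula.box A)) :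
    ∃ w' v, M.le w w' ∧ M.acc w' v ∧ ¬ bsat M v A := by
  have h' : ¬ ∀ w' v, M.le w w' → M.acc w' v → bsat M v A := h
  push_neg at h'
  exact h'

lemma step_sound {M : Birel W} (htr : Transitive M.acc)
    {S : Sequent} {prems : List Sequent}
    (hr : Rule true true false S prems) (hsg : SingleRHS S)
    {I : ℕ → W} (hb : Bad M I S) :
    ∃ S' ∈ prems, ∃ I', Bad M I' S' ∧ ∀ z ∈ S.vars, M.le (I z) (I' z) := by
  obtain ⟨hL, hR, hC⟩ := hb
  cases hr with
  | id R x p =>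
      exact absurd (hL (x, Formula.atom p) (by simp)) (hR _ (by simp))
  | cut R Γ Γ' Δ Δ' x A =>
      by_cases hA : bsat M (I x) A
      · refine ⟨⟨R, (x, A) ::ₘ Γ', Δ'⟩, by simp, I, ⟨?_, ?_, hC⟩, fun z _ => M.le_refl _⟩
        · intro q hq
          rcases Multiset.mem_cons.mp hq with rfl | hq
          · exact hA
          · exact hL q (Multiset.mem_add.mpr (Or.inr hq))
        · intro q hq
          exact hR q (Multiset.mem_add.mpr (Or.inr hq))
      · refine ⟨⟨R, Γ, (x, A) ::ₘ Δ⟩, by simp, I, ⟨?_, ?_, hC⟩, fun z _ => M.le_refl _⟩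
        · intro q hq
          exact hL q (Multiset.mem_add.mpr (Or.inl hq))
        · intro q hq
          rcases Multiset.mem_cons.mp hq with rfl | hq
          · exact hA
          · exact hR q (Multiset.mem_add.mpr (Or.inl hq))
  | wkL R Γ Δ x A =>
      exact ⟨⟨R, Γ, Δ⟩, by simp, I, ⟨fun q hq => hL q (Multiset.mem_cons_of_mem hq),
        fun q hq => hR q hq, hC⟩, fun z _ => M.le_refl _⟩
  | wkR R Γ Δ x A =>
      exact ⟨⟨R, Γ, Δ⟩, by simp, I, ⟨fun q hq => hL q hq,
        fun q hq => hR q (Multiset.mem_cons_of_mem hq), hC⟩, fun z _ => M.le_refl _⟩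
  | ctrL R Γ Δ x A =>
      refine ⟨⟨R, (x, A) ::ₘ (x, A) ::ₘ Γ, Δ⟩, by simp, I, ⟨?_, fun q hq => hR q hq, hC⟩, fun z _ => M.le_refl _⟩
      intro q hq
      exact hL q (by simp only [Multiset.mem_cons] at hq ⊢; tauto)
  | ctrR R Γ Δ x A =>
      refine ⟨⟨R, Γ, (x, A) ::ₘ (x, A) ::ₘ Δ⟩, by simp, I, ⟨fun q hq => hL q hq, ?_, hC⟩, fun z _ => M.le_refl _⟩
      intro q hq
      exact hR q (by simp only [Multiset.mem_cons] at hq ⊢; tauto)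
  | th R R' Γ Δ hthn =>
      obtain ⟨N, ι, J, par, rank, h1, h2, h3, h4, h5, h6⟩ := hC
      exact ⟨⟨R, Γ, Δ⟩, by simp, I, ⟨fun q hq => hL q hq, fun q hq => hR q hq,
        N, ι, J, par, rank, h1, h2, fun p hp => h3 p (Set.mem_union_left _ hp),
        h4, h5, h6⟩, fun z _ => M.le_refl _⟩
  | botL R Γ Δ x =>
      exact (hL (x, Formula.bot) (by simp)).elim
  | impL R Γ Γ' Δ Δ' x A C =>
      by_cases hA : bsat M (I x) A
      · refine ⟨⟨R, (x, C) ::ₘ Γ', Δ'⟩, by simp, I, ⟨?_, ?_, hC⟩, fun z _ => M.le_refl _⟩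
        · intro q hq
          rcases Multiset.mem_cons.mp hq with rfl | hq
          · exact hL (x, Formula.imp A C) (Multiset.mem_cons_self _ _) (I x)
              (M.le_refl _) hA
          · exact hL q (Multiset.mem_cons_of_mem (Multiset.mem_add.mpr (Or.inr hq)))
        · intro q hq
          exact hR q (Multiset.mem_add.mpr (Or.inr hq))
      · refine ⟨⟨R, Γ, (x, A) ::ₘ Δ⟩, by simp, I, ⟨?_, ?_, hC⟩, fun z _ => M.le_refl _⟩
        · intro q hq
          exact hL q (Multiset.mem_cons_of_mem (Multiset.mem_add.mpr (Or.inl hq)))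
        · intro q hq
          rcases Multiset.mem_cons.mp hq with rfl | hq
          · exact hA
          · exact hR q (Multiset.mem_add.mpr (Or.inl hq))
  | impR R Γ Δ x A C hir =>
      have hΔ : Δ = 0 := singleRHS_zero hsg
      subst hΔ
      obtain ⟨w', hle, hA, hnC⟩ :=
        not_bsat_imp (hR (x, Formula.imp A C) (by simp))
      obtain ⟨I', hI'x, hI'le, hC'⟩ := cert_lift hC hle
      refine ⟨⟨R, (x, A) ::ₘ Γ, (x, C) ::ₘ 0⟩, by simp, I', ⟨?_, ?_, hC'⟩, fun z _ => hI'le z⟩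
      · intro q hq
        rcases Multiset.mem_cons.mp hq with rfl | hq
        · dsimp only; rw [hI'x]; exact hA
        · exact bsat_mono M q.2 (hI'le q.1) (hL q hq)
      · intro q hq
        rcases Multiset.mem_cons.mp (show q ∈ (x, C) ::ₘ (0 : Multiset LFormula) from hq) with rfl | hq
        · dsimp only; rw [hI'x]; exact hnC
        · exact absurd hq (Multiset.notMem_zero q)
  | andL₁ R Γ Δ x A C =>
      refine ⟨⟨R, (x, A) ::ₘ Γ, Δ⟩, by simp, I, ⟨?_, fun q hq => hR q hq, hC⟩, fun z _ => M.le_refl _⟩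
      intro q hq
      rcases Multiset.mem_cons.mp hq with rfl | hq
      · exact (hL (x, Formula.and A C) (Multiset.mem_cons_self _ _)).1
      · exact hL q (Multiset.mem_cons_of_mem hq)
  | andL₂ R Γ Δ x A C =>
      refine ⟨⟨R, (x, C) ::ₘ Γ, Δ⟩, by simp, I, ⟨?_, fun q hq => hR q hq, hC⟩, fun z _ => M.le_refl _⟩
      intro q hq
      rcases Multiset.mem_cons.mp hq with rfl | hq
      · exact (hL (x, Formula.and A C) (Multiset.mem_cons_self _ _)).2
      · exact hL q (Multiset.mem_cons_of_mem hq)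
  | orL R Γ Δ x A C =>
      rcases hL (x, Formula.or A C) (Multiset.mem_cons_self _ _) with hA | hA
      · refine ⟨⟨R, (x, A) ::ₘ Γ, Δ⟩, by simp, I, ⟨?_, fun q hq => hR q hq, hC⟩, fun z _ => M.le_refl _⟩
        intro q hq
        rcases Multiset.mem_cons.mp hq with rfl | hq
        · exact hA
        · exact hL q (Multiset.mem_cons_of_mem hq)
      · refine ⟨⟨R, (x, C) ::ₘ Γ, Δ⟩, by simp, I, ⟨?_, fun q hq => hR q hq, hC⟩, fun z _ => M.le_refl _⟩
        intro q hq
        rcases Multiset.mem_cons.mp hq with rfl | hq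
        · exact hA
        · exact hL q (Multiset.mem_cons_of_mem hq)
  | orR₁ R Γ Δ x A C =>
      refine ⟨⟨R, Γ, (x, A) ::ₘ Δ⟩, by simp, I, ⟨fun q hq => hL q hq, ?_, hC⟩, fun z _ => M.le_refl _⟩
      intro q hq
      rcases Multiset.mem_cons.mp hq with rfl | hq
      · exact fun h => hR (x, Formula.or A C) (Multiset.mem_cons_self _ _) (Or.inl h)
      · exact hR q (Multiset.mem_cons_of_mem hq)
  | orR₂ R Γ Δ x A C =>
      refine ⟨⟨R, Γ, (x, C) ::ₘ Δ⟩, by simp, I, ⟨fun q hq => hL q hq, ?_, hC⟩, fun z _ => M.le_refl _⟩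
      intro q hq
      rcases Multiset.mem_cons.mp hq with rfl | hq
      · exact fun h => hR (x, Formula.or A C) (Multiset.mem_cons_self _ _) (Or.inr h)
      · exact hR q (Multiset.mem_cons_of_mem hq)
  | andR R Γ Δ x A C =>
      by_cases hA : bsat M (I x) A
      · refine ⟨⟨R, Γ, (x, C) ::ₘ Δ⟩, by simp, I, ⟨fun q hq => hL q hq, ?_, hC⟩, fun z _ => M.le_refl _⟩
        intro q hq
        rcases Multiset.mem_cons.mp hq with rfl | hq
        · exact fun h => hR (x, Formula.and A C) (Multiset.mem_cons_self _ _) ⟨hA, h⟩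
        · exact hR q (Multiset.mem_cons_of_mem hq)
      · refine ⟨⟨R, Γ, (x, A) ::ₘ Δ⟩, by simp, I, ⟨fun q hq => hL q hq, ?_, hC⟩, fun z _ => M.le_refl _⟩
        intro q hq
        rcases Multiset.mem_cons.mp hq with rfl | hq
        · exact hA
        · exact hR q (Multiset.mem_cons_of_mem hq)
  | diaL R Γ Δ x y A hfresh =>
      obtain ⟨v, hv, hbv⟩ := hL (x, Formula.dia A) (Multiset.mem_cons_self _ _)
      have hxv : x ∈ (Sequent.mk R ((x, Formula.dia A) ::ₘ Γ) Δ).vars :=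
        mem_vars_left (S := Sequent.mk R ((x, Formula.dia A) ::ₘ Γ) Δ) (q := (x, Formula.dia A)) (Multiset.mem_cons_self _ _)
      have hxy : x ≠ y := fun h => hfresh (h ▸ hxv)
      have hyR : ∀ p ∈ R, p.1 ≠ y ∧ p.2 ≠ y := by
        intro p hp
        constructor
        · exact fun h => hfresh (h ▸ mem_vars_rel1 (S := ⟨R, (x, Formula.dia A) ::ₘ Γ, Δ⟩) hp)
        · exact fun h => hfresh (h ▸ mem_vars_rel2 (S := ⟨R, (x, Formula.dia A) ::ₘ Γ, Δ⟩) hp)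
      obtain ⟨I', hI'y, hI'off, hC'⟩ := cert_alloc hC hv hxy hyR
      refine ⟨⟨insert (x, y) R, (y, A) ::ₘ Γ, Δ⟩, by simp, I', ⟨?_, ?_, hC'⟩, ?_⟩
      · intro q hq
        rcases Multiset.mem_cons.mp hq with rfl | hq
        · dsimp only; rw [hI'y]; exact hbv
        · have hne : q.1 ≠ y := fun h => hfresh
            (h ▸ mem_vars_left (S := ⟨R, (x, Formula.dia A) ::ₘ Γ, Δ⟩)
              (Multiset.mem_cons_of_mem hq))
          rw [hI'off q.1 hne]
          exact hL q (Multiset.mem_cons_of_mem hq)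
      · intro q hq
        have hne : q.1 ≠ y := fun h => hfresh
          (h ▸ mem_vars_right (S := ⟨R, (x, Formula.dia A) ::ₘ Γ, Δ⟩) hq)
        rw [hI'off q.1 hne]
        exact hR q hq
      · intro z hz
        have hne : z ≠ y := fun h => hfresh (h ▸ hz)
        rw [hI'off z hne]
        exact M.le_refl _
  | diaR R Γ Δ x y A hxy =>
      refine ⟨⟨R, Γ, (y, A) ::ₘ Δ⟩, by simp, I, ⟨fun q hq => hL q hq, ?_, hC⟩, fun z _ => M.le_refl _⟩
      intro q hq
      rcases Multiset.mem_cons.mp hq with rfl | hq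
      · intro hby
        exact hR (x, Formula.dia A) (Multiset.mem_cons_self _ _)
          ⟨I y, cert_acc htr hC (x, y) hxy, hby⟩
      · exact hR q (Multiset.mem_cons_of_mem hq)
  | boxR R Γ Δ x y A hir hfresh =>
      have hΔ : Δ = 0 := singleRHS_zero hsg
      subst hΔ
      obtain ⟨w', v, hle, hacc, hnA⟩ :=
        not_bsat_box (hR (x, Formula.box A) (by simp))
      obtain ⟨I₁, hI₁x, hI₁le, hC₁⟩ := cert_lift hC hle
      have hacc₁ : M.acc (I₁ x) v := hI₁x ▸ hacc
      have hxv : x ∈ (Sequent.mk R Γ ((x, Formula.box A) ::ₘ 0)).vars :=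
        mem_vars_right (S := ⟨R, Γ, (x, Formula.box A) ::ₘ 0⟩) (q := (x, Formula.box A)) (by simp)
      have hxy : x ≠ y := fun h => hfresh (h ▸ hxv)
      have hyR : ∀ p ∈ R, p.1 ≠ y ∧ p.2 ≠ y := by
        intro p hp
        constructor
        · exact fun h => hfresh (h ▸ mem_vars_rel1 (S := ⟨R, Γ, (x, Formula.box A) ::ₘ 0⟩) hp)
        · exact fun h => hfresh (h ▸ mem_vars_rel2 (S := ⟨R, Γ, (x, Formula.box A) ::ₘ 0⟩) hp)
      obtain ⟨I₂, hI₂y, hI₂off, hC₂⟩ := cert_alloc hC₁ hacc₁ hxy hyR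
      refine ⟨⟨insert (x, y) R, Γ, (y, A) ::ₘ 0⟩, by simp, I₂, ⟨?_, ?_, hC₂⟩, ?_⟩
      · intro q hq
        have hne : q.1 ≠ y := fun h => hfresh
          (h ▸ mem_vars_left (S := ⟨R, Γ, (x, Formula.box A) ::ₘ 0⟩) hq)
        rw [hI₂off q.1 hne]
        exact bsat_mono M q.2 (hI₁le q.1) (hL q hq)
      · intro q hq
        rcases Multiset.mem_cons.mp (show q ∈ (y, A) ::ₘ (0 : Multiset LFormula) from hq) with rfl | hq
        · dsimp only; rw [hI₂y]; exact hnA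
        · exact absurd hq (Multiset.notMem_zero q)
      · intro z hz
        have hne : z ≠ y := fun h => hfresh (h ▸ hz)
        rw [hI₂off z hne]
        exact hI₁le z
  | boxL R Γ Δ x y A hxy =>
      refine ⟨⟨R, (y, A) ::ₘ Γ, Δ⟩, by simp, I, ⟨?_, fun q hq => hR q hq, hC⟩, fun z _ => M.le_refl _⟩
      intro q hq
      rcases Multiset.mem_cons.mp hq with rfl | hq
      · exact hL (x, Formula.box A) (Multiset.mem_cons_self _ _) (I x) (I y)
          (M.le_refl _) (cert_acc htr hC (x, y) hxy)
      · exact hL q (Multiset.mem_cons_of_mem hq)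
  | trans R Γ Δ x y z htr' hxy hyz =>
      obtain ⟨N, ι, J, par, rank, h1, h2, h3, h4, h5, h6⟩ := hC
      refine ⟨⟨insert (x, z) R, Γ, Δ⟩, by simp, I, ⟨fun q hq => hL q hq, fun q hq => hR q hq,
        N, ι, J, par, rank, h1, h2, ?_, h4, h5, h6⟩, fun z _ => M.le_refl _⟩
      intro p hp
      rcases Set.mem_insert_iff.mp hp with rfl | hp
      · exact TransGen.trans (h3 (x, y) hxy) (h3 (y, z) hyz)
      · exact h3 p hp

end Step

section Initial
open Relation
variable {W : Type}
attribute [local instance] Classical.propDecidable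

lemma chain_snoc {pe : ℕ → ℕ → Prop} :
    ∀ (l : List ℕ) (a x : ℕ), List.Chain pe a (l ++ [x]) ↔
      List.Chain pe a l ∧ pe ((a :: l).getLast (List.cons_ne_nil _ _)) x := by
  intro l
  induction l with
  | nil => intro a x; simp [List.Chain]
  | cons b l ih =>
      intro a x
      simp only [List.Chain] at ih ⊢
      rw [List.cons_append, List.chain_cons, List.chain_cons, ih b x,
        List.getLast_cons (List.cons_ne_nil _ _)]
      tauto

lemma chain_transGen {pe : ℕ → ℕ → Prop} :
    ∀ (l : List ℕ) (a x : ℕ), l ≠ [] → List.Chain pe a l → l.getLast? = some x →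
      TransGen pe a x := by
  intro l
  induction l with
  | nil => intro a x h; exact absurd rfl h
  | cons b l ih =>
      intro a x _ hch hlast
      simp only [List.Chain] at hch
      rw [List.chain_cons] at hch
      rcases List.eq_nil_or_concat l with rfl | ⟨l', e, rfl⟩
      · simp only [List.getLast?_singleton, Option.some.injEq] at hlast
        subst hlast
        exact TransGen.single hch.1
      · have hlast' : e = x := by
          rw [show b :: l'.concat e = (b :: l') ++ [e] from by simp,
            List.getLast?_concat] at hlast
          injection hlast
        refine TransGen.head hch.1 (ih b x (by simp) hch.2 ?_)
        rw [List.concat_eq_append, List.getLast?_concat, hlast']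
  
lemma initial_cert {M : Birel W} (hterm : Terminating (comp M)) (htr : Transitive M.acc)
    {R : Set (ℕ × ℕ)} {Γ : Multiset LFormula} {x₀ : ℕ} {A : Formula} {I : ℕ → W}
    (hqt : QuasiTreeLike R Γ x₀)
    (hI : Interp M I ⟨R, Γ, {(x₀, A)}⟩) : Cert M I R := by
  have hacc : ∀ a b : ℕ, (a, b) ∈ R → M.acc (I a) (I b) := fun a b h => hI a b h
  rcases hqt with ⟨hR, -⟩ | ⟨⟨R₀, hT, hsub, hcov⟩, -⟩
  · subst hR
    exact ⟨0, fun z => 2*z, fun m => I (m/2), fun _ => none, fun _ => 0,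
      fun m k h => by simp at h, fun m k h => by simp at h,
      fun p hp => absurd hp (Set.notMem_empty p),
      fun z => show I z = I (2*z/2) from by rw [show 2*z/2 = z from by omega],
      fun z => Or.inl (show 2*z % 2 = 0 from by omega),
      fun m k h => by simp at h⟩
  · obtain ⟨r, hr, hU⟩ := hT
    set pe : ℕ → ℕ → Prop := fun a b => (a, b) ∈ R₀ with hpe
    have hacyc : ∀ z, ¬ TransGen pe z z := by
      intro z h
      have key : ∀ a b : ℕ, TransGen pe a b → M.acc (I a) (I b) := by
        intro a b h
        induction h with
        | single h => exact hacc _ _ (hsub h)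
        | tail h₁ h₂ ih => exact htr ih (hacc _ _ (hsub h₂))
      exact no_acc_self M hterm (key z z h)
    have hchain : ∀ z, z ∈ relVars R₀ → z ≠ r →
        ∃ l, (l ≠ [] ∧ List.Chain pe r l ∧ l.getLast? = some z) ∧
          ∀ l', (l' ≠ [] ∧ List.Chain pe r l' ∧ l'.getLast? = some z) → l' = l :=
      fun z h1 h2 => hU z h1 h2
    choose ch hch huniq using hchain
    -- the parent and rank functions on the tree
    set par₀ : ℕ → Option ℕ := fun z =>
      if hz : z ∈ relVars R₀ ∧ z ≠ r then
        some ((r :: (ch z hz.1 hz.2).dropLast).getLast (List.cons_ne_nil _ _))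
      else none with hpar₀
    set rank₀ : ℕ → ℕ := fun z =>
      if hz : z ∈ relVars R₀ ∧ z ≠ r then (ch z hz.1 hz.2).length else 0 with hrank₀
    -- basic facts about the chosen chains
    have hsplit : ∀ z (h1 : z ∈ relVars R₀) (h2 : z ≠ r),
        (ch z h1 h2).dropLast ++ [z] = ch z h1 h2 := by
      intro z h1 h2
      exact List.dropLast_append_getLast? z (by
        have := (hch z h1 h2).2.2
        exact (Option.mem_def).mpr this)
    have hpe_par : ∀ z p, par₀ z = some p → pe p z ∧ rank₀ p < rank₀ z := by
      intro z p hp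
      rw [hpar₀] at hp
      dsimp only at hp
      by_cases hz : z ∈ relVars R₀ ∧ z ≠ r
      · rw [dif_pos hz] at hp
        injection hp with hp
        obtain ⟨hne, hchn, hlast⟩ := hch z hz.1 hz.2
        have hchn' : List.Chain pe r ((ch z hz.1 hz.2).dropLast ++ [z]) := by
          rw [hsplit z hz.1 hz.2]; exact hchn
        rw [chain_snoc] at hchn'
        have hpez : pe ((r :: (ch z hz.1 hz.2).dropLast).getLast (List.cons_ne_nil _ _)) z :=
          hchn'.2
        subst hp
        refine ⟨hpez, ?_⟩
        -- rank decreases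
        set p := (r :: (ch z hz.1 hz.2).dropLast).getLast (List.cons_ne_nil _ _) with hpdef
        by_cases hpr : p = r
        · have hgoal : rank₀ p = 0 := by
            rw [hrank₀]
            exact dif_neg (fun h => h.2 hpr)
          have hgz : rank₀ z = (ch z hz.1 hz.2).length := by
            rw [hrank₀]
            exact dif_pos hz
          rw [hgoal, hgz]
          have := List.length_pos_iff.mpr hne
          omega
        · have hpvars : p ∈ relVars R₀ := ⟨z, Or.inl hpez⟩
          have hdlne : (ch z hz.1 hz.2).dropLast ≠ [] := by
            intro h
            apply hpr
            rw [hpdef, h]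
            rfl
          have hplast : ((ch z hz.1 hz.2).dropLast).getLast? = some p := by
            rw [List.getLast?_eq_getLast hdlne, hpdef,
              List.getLast_cons hdlne]
          have heq : (ch z hz.1 hz.2).dropLast = ch p hpvars hpr :=
            huniq p hpvars hpr _ ⟨hdlne, hchn'.1, hplast⟩
          have hgp : rank₀ p = (ch p hpvars hpr).length := by
            rw [hrank₀]
            exact dif_pos ⟨hpvars, hpr⟩
          have hgz : rank₀ z = (ch z hz.1 hz.2).length := by
            rw [hrank₀]
            exact dif_pos hz
          rw [hgp, hgz, ← heq]
          have h1 := List.length_dropLast (xs := ch z hz.1 hz.2)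
          have h2 := List.length_pos_iff.mpr hne
          omega
      · rw [dif_neg hz] at hp; cases hp
    have hpar_uniq : ∀ y z, pe y z → par₀ z = some y := by
      intro y z hyz
      have hzvars : z ∈ relVars R₀ := ⟨y, Or.inr hyz⟩
      have hyvars : y ∈ relVars R₀ := ⟨z, Or.inl hyz⟩
      have hzr : z ≠ r := by
        intro h
        by_cases hyr : y = r
        · have hy : y = z := hyr.trans h.symm
          rw [hy] at hyz
          exact hacyc z (TransGen.single hyz)
        · obtain ⟨hne, hchn, hlast⟩ := hch y hyvars hyr
          rw [h] at hyz
          exact hacyc r (TransGen.tail (chain_transGen _ _ _ hne hchn hlast) hyz)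
      by_cases hyr : y = r
      · have hP : ([z] : List ℕ) ≠ [] ∧ List.Chain pe r [z] ∧
            ([z] : List ℕ).getLast? = some z :=
          ⟨by simp, by simp only [List.Chain]; rw [List.chain_cons]; exact ⟨hyr ▸ hyz, List.Chain.nil⟩, by simp⟩
        have hz' := huniq z hzvars hzr _ hP
        have hz2 : par₀ z =
            some ((r :: (ch z hzvars hzr).dropLast).getLast (List.cons_ne_nil _ _)) :=
          dif_pos ⟨hzvars, hzr⟩
        rw [hz2, ← hz']
        rw [hyr]
        rfl
      · obtain ⟨hne, hchn, hlast⟩ := hch y hyvars hyr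
        have hylast : (ch y hyvars hyr).getLast hne = y := by
          have h := List.getLast?_eq_getLast hne
          rw [h] at hlast
          injection hlast
        have hP : (ch y hyvars hyr) ++ [z] ≠ [] ∧
            List.Chain pe r ((ch y hyvars hyr) ++ [z]) ∧
            ((ch y hyvars hyr) ++ [z]).getLast? = some z := by
          refine ⟨by simp, ?_, List.getLast?_concat⟩
          rw [chain_snoc]
          refine ⟨hchn, ?_⟩
          rw [List.getLast_cons hne, hylast]
          exact hyz
        have hz' := huniq z hzvars hzr _ hP
        have hz2 : par₀ z =
            some ((r :: (ch z hzvars hzr).dropLast).getLast (List.cons_ne_nil _ _)) :=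
          dif_pos ⟨hzvars, hzr⟩
        rw [hz2, ← hz', List.dropLast_concat, List.getLast_cons hne, hylast]
    -- assemble the certificate
    refine ⟨0, fun z => 2*z, fun m => I (m/2),
      fun m => if m % 2 = 0 then Option.map (fun k => 2*k) (par₀ (m/2)) else none,
      fun m => if m % 2 = 0 then rank₀ (m/2) else 0, ?_, ?_, ?_, ?_, ?_, ?_⟩
    · intro m k h
      dsimp only at h ⊢
      by_cases hm : m % 2 = 0
      · rw [if_pos hm] at h
        rcases Option.map_eq_some_iff.mp h with ⟨k', hk', rfl⟩
        have e1 : (if 2*k' % 2 = 0 then rank₀ (2*k'/2) else 0) = rank₀ k' := by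
          rw [if_pos (show 2*k' % 2 = 0 from by omega), show 2*k'/2 = k' from by omega]
        have e2 : (if m % 2 = 0 then rank₀ (m/2) else 0) = rank₀ (m/2) := if_pos hm
        rw [e1, e2]
        exact (hpe_par _ _ hk').2
      · rw [if_neg hm] at h; cases h
    · intro m k h
      dsimp only at h
      by_cases hm : m % 2 = 0
      · rw [if_pos hm] at h
        rcases Option.map_eq_some_iff.mp h with ⟨k', hk', rfl⟩
        show M.acc (I (2*k'/2)) (I (m/2))
        rw [show 2*k'/2 = k' from by omega]
        exact hacc _ _ (hsub (hpe_par _ _ hk').1)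
      · rw [if_neg hm] at h; cases h
    · intro p hp
      have htg : TransGen pe p.1 p.2 := hcov p hp
      refine TransGen.lift (fun z => 2*z) ?_ _ _ htg
      intro a b hab
      show (if 2 * b % 2 = 0 then Option.map (fun k => 2*k) (par₀ (2 * b / 2)) else none) =
        some (2 * a)
      rw [if_pos (by omega), show 2 * b / 2 = b by omega, hpar_uniq a b hab]
      rfl
    · intro z
      show I z = I (2*z/2)
      rw [show 2 * z / 2 = z by omega]
    · intro z; exact Or.inl (show 2*z % 2 = 0 from by omega)
    · intro m k h
      dsimp only at h
      by_cases hm : m % 2 = 0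
      · rw [if_pos hm] at h
        rcases Option.map_eq_some_iff.mp h with ⟨k', hk', rfl⟩
        exact ⟨Or.inl hm, Or.inl (by omega)⟩
      · rw [if_neg hm] at h; cases h

end Initial

section Main
open Relation
attribute [local instance] Classical.propDecidable

theorem lIGL_soundness_aux (R : Set (ℕ × ℕ)) (Γ : Multiset LFormula) (x₀ : ℕ)
    (A : Formula) (hqt : QuasiTreeLike R Γ x₀)
    (h : InfProof RuleLIK4 ⟨R, Γ, {(x₀, A)}⟩) :
    ∀ (W : Type) (B : Birel W), Nonempty W → BirelIGL B →
      ∀ I : ℕ → W, Interp B I ⟨R, Γ, {(x₀, A)}⟩ → seqSat B I ⟨R, Γ, {(x₀, A)}⟩ := by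
  classical
  intro W B _ hIGL I hInterp
  obtain ⟨htr, hterm⟩ := hIGL
  intro hleft
  by_contra hno
  push_neg at hno
  obtain ⟨P, hprog⟩ := h
  have hbad₀ : Bad B I ⟨R, Γ, {(x₀, A)}⟩ := ⟨hleft, hno, initial_cert hterm htr hqt hInterp⟩
  -- the type of "bad states" along a branch of the preproof
  have hstep : ∀ s : {s : (List ℕ × Sequent × (ℕ → W)) //
        P.node s.1 = some s.2.1 ∧ Bad B s.2.2 s.2.1},
      ∃ s' : {s : (List ℕ × Sequent × (ℕ → W)) //
        P.node s.1 = some s.2.1 ∧ Bad B s.2.2 s.2.1},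
      (∃ i, s'.1.1 = s.1.1 ++ [i]) ∧
      (∀ z ∈ s.1.2.1.vars, B.le (s.1.2.2 z) (s'.1.2.2 z)) := by
    rintro ⟨⟨p, S, Ic⟩, hnode, hbad⟩
    obtain ⟨prems, hrule, hch⟩ := P.children p S hnode
    obtain ⟨hr4, hsg, hsgp⟩ := hrule
    obtain ⟨S', hmem, I', hbad', hle⟩ := step_sound htr hr4 hsg hbad
    obtain ⟨i, hi⟩ := List.mem_iff_getElem?.mp hmem
    exact ⟨⟨⟨p ++ [i], S', I'⟩, by rw [hch i, hi], hbad'⟩, ⟨i, rfl⟩, hle⟩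
  choose f hf1 hf2 using hstep
  set σ : ℕ → {s : (List ℕ × Sequent × (ℕ → W)) //
      P.node s.1 = some s.2.1 ∧ Bad B s.2.2 s.2.1} :=
    fun n => f^[n] ⟨⟨[], ⟨R, Γ, {(x₀, A)}⟩, I⟩, P.root, hbad₀⟩ with hσdef
  have hσ : ∀ n, σ (n+1) = f (σ n) := fun n => Function.iterate_succ_apply' f n _
  set g : ℕ → ℕ := fun n => (hf1 (σ n)).choose with hgdef
  have hpath : ∀ n, (σ n).1.1 = branchPath g n := by
    intro n
    induction n with
    | zero => rfl
    | succ n ih =>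
        have hspec := (hf1 (σ n)).choose_spec
        rw [hσ n, hspec]
        have hb : branchPath g (n+1) = branchPath g n ++ [g n] := by
          unfold branchPath
          rw [List.range_succ]
          simp
        rw [hb, ← ih]
  set Sb : ℕ → Sequent := fun n => (σ n).1.2.1 with hSbdef
  have hnode : ∀ n, P.node (branchPath g n) = some (Sb n) := by
    intro n
    rw [← hpath n]
    exact (σ n).2.1
  obtain ⟨k, x, hx1, hx2, hx3⟩ := hprog g Sb hnode
  set wseq : ℕ → W := fun n => (σ n).1.2.2 (x n) with hwdef
  have hIle : ∀ n, ∀ z ∈ (Sb n).vars, B.le ((σ n).1.2.2 z) ((σ (n+1)).1.2.2 z) := by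
    intro n z hz
    have hh := hf2 (σ n) z hz
    rw [hσ n]
    exact hh
  have hcc : ∀ n, Cert B ((σ n).1.2.2) (Sb n).rel := fun n => (σ n).2.2.2.2
  have hmain : ∀ i, k ≤ i →
      B.le (wseq i) (wseq (i+1)) ∨ ∃ v, B.acc (wseq i) v ∧ B.le v (wseq (i+1)) := by
    intro i hk
    rcases hx2 i hk with heq | hrel
    · left
      have hmem : x i ∈ (Sb i).vars := hx1 i hk
      have hh := hIle i (x i) hmem
      show B.le ((σ i).1.2.2 (x i)) ((σ (i+1)).1.2.2 (x (i+1)))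
      rw [heq]
      exact hh
    · right
      refine ⟨(σ i).1.2.2 (x (i+1)), ?_, ?_⟩
      · exact cert_acc htr (hcc i) (x i, x (i+1)) hrel
      · exact hIle i (x (i+1)) (mem_vars_rel2 hrel)
  have hinf : ∀ n, ∃ i, n ≤ i ∧ k ≤ i ∧
      ∃ v, B.acc (wseq i) v ∧ B.le v (wseq (i+1)) := by
    intro n
    obtain ⟨i, hni, hki, hrel⟩ := hx3 n
    exact ⟨i, hni, hki, (σ i).1.2.2 (x (i+1)),
      cert_acc htr (hcc i) (x i, x (i+1)) hrel, hIle i (x (i+1)) (mem_vars_rel2 hrel)⟩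
  exact no_infinite_mixed B hterm wseq k hmain hinf

end Main

/-- **Soundness of ℓIGL.** If a quasi-tree-like single-succedent sequent has an
∞-proof in ℓIK4 then it is satisfied, under every interpretation, in every
model of birel-IGL. -/
theorem lIGL_soundness (R : Set (ℕ × ℕ)) (Γ : Multiset LFormula) (x₀ : ℕ)
    (A : Formula) (hqt : QuasiTreeLike R Γ x₀)
    (h : InfProof RuleLIK4 ⟨R, Γ, {(x₀, A)}⟩) :
    ∀ (W : Type) (B : Birel W), Nonempty W → BirelIGL B →
      ∀ I : ℕ → W, Interp B I ⟨R, Γ, {(x₀, A)}⟩ → seqSat B I ⟨R, Γ, {(x₀, A)}⟩ := by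
  exact lIGL_soundness_aux R Γ x₀ A hqt h

end IGL
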